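/- arXiv:0909.5244 — 5 statements merged into one kernel-verified Lean document; each statement's English description precedes it below -/
import Mathlib

section
/- Let d be a positive integer, let ρ : ℝ^d → ℝ be a positive function, let ε ∈ (0,1) and C_sg > 0, and suppose ρ satisfies (1-ε)-slow growth with constant C_sg. Then ρ satisfies self-majorization of order r = (1-ε)/ε with constant C_sm = min( 2^{ε-1}/C_sg , (2^{ε-1}/C_sg)^{1/ε} ); that is, for all x, y ∈ ℝ^d, ρ(y) ≥ C_sm · ρ(x) · (1 + |x-y|/ρ(x))^{-(1-ε)/ε}. -/
open Real

/-!
Slow growth applied at the pair `(y, x)` gives `c ρ x ≤ ρ y ^ ε M ^ (1 - ε)`, with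
`c = 2 ^ (ε - 1) / C_sg` and `M = max (ρ y) ‖x - y‖` (the factor `2 ^ (ε - 1)` absorbs
`ρ y + ‖x - y‖ ≤ 2 M`). If `‖x - y‖ ≤ ρ y` this reads `c ρ x ≤ ρ y`. Otherwise raising it to the
power `1 / ε = 1 + r` gives `ρ y ≥ c ^ (1 / ε) ρ x (‖x - y‖ / ρ x) ^ (-r)`, and
`‖x - y‖ / ρ x ≤ 1 + ‖x - y‖ / ρ x`.
-/

section

variable {E : Type*} [SeminormedAddCommGroup E]

def HasSlowGrowth (ρ : E → ℝ) (κ C : ℝ) : Prop :=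
  ∀ x α, ρ α ≤ C * ρ x * (1 + ‖x - α‖ / ρ x) ^ κ

def HasSelfMajorization (ρ : E → ℝ) (r C : ℝ) : Prop :=
  ∀ x y, ρ y ≥ C * ρ x * (1 + ‖x - y‖ / ρ x) ^ (-r)

end

lemma mul_one_add_div_rpow {b t : ℝ} (hb : 0 < b) (ht : 0 ≤ t) (p : ℝ) :
    b * (1 + t / b) ^ p = b ^ (1 - p) * (b + t) ^ p := by
  rw [one_add_div hb.ne', div_rpow (by positivity) hb.le, rpow_sub hb, rpow_one]
  field_simp

lemma two_rpow_div_mul_le_of_le_mul_one_add_div_rpow {A B t ε C : ℝ} (hB : 0 < B) (ht : 0 ≤ t)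
    (hε1 : ε < 1) (hC : 0 < C) (h : A ≤ C * B * (1 + t / B) ^ (1 - ε)) :
    2 ^ (ε - 1) / C * A ≤ B ^ ε * max B t ^ (1 - ε) := by
  have hmean : (B + t) / 2 ≤ max B t := by linarith [le_max_left B t, le_max_right B t]
  calc 2 ^ (ε - 1) / C * A = 2 ^ (ε - 1) * (A / C) := by ring
    _ ≤ 2 ^ (ε - 1) * (B * (1 + t / B) ^ (1 - ε)) := by
        gcongr
        rw [div_le_iff₀ hC]
        linarith
    _ = B ^ ε * ((B + t) / 2) ^ (1 - ε) := by
        rw [mul_one_add_div_rpow hB ht, sub_sub_cancel, div_rpow (by positivity) zero_le_two,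
          show ε - 1 = -(1 - ε) by ring, rpow_neg zero_le_two]
        ring
    _ ≤ B ^ ε * max B t ^ (1 - ε) := by
        gcongr

lemma min_mul_mul_one_add_div_rpow_neg_le {A B t ε c : ℝ} (hA : 0 < A) (hB : 0 < B) (ht : 0 ≤ t)
    (hε0 : 0 < ε) (hε1 : ε < 1) (hc : 0 < c) (h : c * A ≤ B ^ ε * max B t ^ (1 - ε)) :
    min c (c ^ (1 / ε)) * A * (1 + t / A) ^ (-((1 - ε) / ε)) ≤ B := by
  have hr : -((1 - ε) / ε) ≤ 0 := by
    have : 0 ≤ (1 - ε) / ε := div_nonneg (by linarith) hε0.le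
    linarith
  rcases le_or_gt t B with htB | hBt
  · have hcA : c * A ≤ B := by
      rwa [max_eq_left htB, ← rpow_add hB, add_sub_cancel, rpow_one] at h
    calc min c (c ^ (1 / ε)) * A * (1 + t / A) ^ (-((1 - ε) / ε)) ≤ c * A * 1 := by
          gcongr
          · exact min_le_left _ _
          · exact rpow_le_one_of_one_le_of_nonpos (le_add_of_nonneg_right (by positivity)) hr
      _ ≤ B := by rwa [mul_one]
  · have ht0 : 0 < t := hB.trans hBt
    rw [max_eq_right hBt.le] at h
    have hpow : (c * A) ^ (1 / ε) ≤ B * t ^ ((1 - ε) / ε) :=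
      calc (c * A) ^ (1 / ε) ≤ (B ^ ε * t ^ (1 - ε)) ^ (1 / ε) := by gcongr
        _ = B * t ^ ((1 - ε) / ε) := by
          rw [mul_rpow (by positivity) (by positivity), ← rpow_mul hB.le, ← rpow_mul ht,
            mul_one_div_cancel hε0.ne', rpow_one, mul_one_div]
    have hexp : 1 - -((1 - ε) / ε) = 1 / ε := by field_simp; ring
    calc min c (c ^ (1 / ε)) * A * (1 + t / A) ^ (-((1 - ε) / ε))
        ≤ c ^ (1 / ε) * (A * (1 + t / A) ^ (-((1 - ε) / ε))) := by
          rw [mul_assoc]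
          gcongr
          exact min_le_right _ _
      _ = (c * A) ^ (1 / ε) * (A + t) ^ (-((1 - ε) / ε)) := by
          rw [mul_one_add_div_rpow hA ht, hexp, mul_rpow hc.le hA.le, mul_assoc]
      _ ≤ B * t ^ ((1 - ε) / ε) * t ^ (-((1 - ε) / ε)) :=
          mul_le_mul hpow (rpow_le_rpow_of_nonpos ht0 (by linarith) hr) (by positivity)
            (by positivity)
      _ = B := by rw [mul_assoc, ← rpow_add ht0, add_neg_cancel, rpow_zero, mul_one]

theorem HasSlowGrowth.hasSelfMajorization {E : Type*} [SeminormedAddCommGroup E] {ρ : E → ℝ}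
    {ε C : ℝ} (hρ : ∀ x, 0 < ρ x) (hε0 : 0 < ε) (hε1 : ε < 1) (hC : 0 < C)
    (h : HasSlowGrowth ρ (1 - ε) C) :
    HasSelfMajorization ρ ((1 - ε) / ε)
      (min (2 ^ (ε - 1) / C) ((2 ^ (ε - 1) / C) ^ (1 / ε))) := by
  intro x y
  have hyx := h y x
  rw [norm_sub_rev] at hyx
  exact min_mul_mul_one_add_div_rpow_neg_le (hρ x) (hρ y) (norm_nonneg _) hε0 hε1
    (by positivity) (two_rpow_div_mul_le_of_le_mul_one_add_div_rpow (hρ y) (norm_nonneg _) hε1 hC hyx)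

theorem slow_growth_implies_self_majorization_general
    (d : ℕ) (ρ : EuclideanSpace ℝ (Fin d) → ℝ) (hρ : ∀ x, 0 < ρ x)
    (ε : ℝ) (hε0 : 0 < ε) (hε1 : ε < 1) (Csg : ℝ) (hCsg : 0 < Csg)
    (hsg : ∀ x α, ρ α ≤ Csg * ρ x * (1 + ‖x - α‖ / ρ x) ^ (1 - ε)) :
    ∀ x y, ρ y ≥
      min ((2 : ℝ) ^ (ε - 1) / Csg) (((2 : ℝ) ^ (ε - 1) / Csg) ^ (1 / ε)) *
        ρ x * (1 + ‖x - y‖ / ρ x) ^ (-((1 - ε) / ε)) :=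
  HasSlowGrowth.hasSelfMajorization hρ hε0 hε1 hCsg hsg

/-- If a positive function `ρ` on `ℝ^d` satisfies `(1-ε)`-slow growth with
constant `C_sg`, then it satisfies self-majorization of order `r = (1-ε)/ε` with constant
`C_sm = min (2^(ε-1)/C_sg) ((2^(ε-1)/C_sg)^(1/ε))`. -/
theorem slow_growth_implies_self_majorization
    (d : ℕ) (hd : 0 < d) (ρ : EuclideanSpace ℝ (Fin d) → ℝ) (hρ : ∀ x, 0 < ρ x)
    (ε : ℝ) (hε0 : 0 < ε) (hε1 : ε < 1) (Csg : ℝ) (hCsg : 0 < Csg)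
    (hsg : ∀ x α, ρ α ≤ Csg * ρ x * (1 + ‖x - α‖ / ρ x) ^ (1 - ε)) :
    ∀ x y, ρ y ≥
      min ((2 : ℝ) ^ (ε - 1) / Csg) (((2 : ℝ) ^ (ε - 1) / Csg) ^ (1 / ε)) *
        ρ x * (1 + ‖x - y‖ / ρ x) ^ (-((1 - ε) / ε)) :=
  slow_growth_implies_self_majorization_general d ρ hρ ε hε0 hε1 Csg hCsg hsg
end

section
/- Let d be a positive integer, let ρ : ℝ^d → ℝ be a positive function, let r > 0 and C_sm > 0, and suppose ρ satisfies self-majorization of order r with constant C_sm. Then ρ satisfies (1-ε)-slow growth with ε = 1/(r+1) and constant C_sg = max( 2^r/C_sm , (2^r/C_sm)^{1/(1+r)} ); that is, for all x, α ∈ ℝ^d, ρ(α) ≤ C_sg · ρ(x) · (1 + |x-α|/ρ(x))^{r/(r+1)}. -/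
/-!
Self-majorization at `(α, x)` gives `ρ α ≤ ρ x / C_sm · (1 + |x - α| / ρ α) ^ r`. When
`|x - α| ≤ ρ α` the bracket is at most `2`, so `ρ α ≤ (2 ^ r / C_sm) ρ x`. Otherwise the bracket is
at most `2 |x - α| / ρ α`, which yields `ρ α ^ (1 + r) ≤ (2 ^ r / C_sm) ρ x |x - α| ^ r`; bounding
`|x - α|` by `ρ x (1 + |x - α| / ρ x)` and taking `(1 + r)`-th roots gives the exponent `r / (r + 1)`.
-/

open Real

variable {E : Type*} [SeminormedAddGroup E]

def SelfMajorizing (ρ : E → ℝ) (r C : ℝ) : Prop :=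
  ∀ x y, ρ y ≥ C * ρ x * (1 + ‖x - y‖ / ρ x) ^ (-r)

def SlowGrowth (ρ : E → ℝ) (θ C : ℝ) : Prop :=
  ∀ x α, ρ α ≤ C * ρ x * (1 + ‖x - α‖ / ρ x) ^ θ

lemma SelfMajorizing.le_div_mul {ρ : E → ℝ} {r C : ℝ} (h : SelfMajorizing ρ r C)
    (hρ : ∀ x, 0 < ρ x) (hC : 0 < C) (x α : E) :
    ρ α ≤ ρ x / C * (1 + ‖x - α‖ / ρ α) ^ r := by
  have hbase : 0 < 1 + ‖x - α‖ / ρ α := by have := hρ α; positivity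
  have h := h α x
  rw [norm_sub_rev, rpow_neg hbase.le, ge_iff_le, ← div_eq_mul_inv,
    div_le_iff₀ (rpow_pos_of_pos hbase r)] at h
  rw [div_mul_eq_mul_div, le_div_iff₀ hC]
  linarith

section RealInequalities

variable {a b t r C : ℝ}

lemma le_two_rpow_div_mul_of_le (ha : 0 < a) (hb : 0 ≤ b) (ht : 0 ≤ t) (hr : 0 ≤ r)
    (hC : 0 < C) (hta : t ≤ a) (h : a ≤ b / C * (1 + t / a) ^ r) :
    a ≤ 2 ^ r / C * b := by
  have hbracket : 1 + t / a ≤ 2 := by linarith [(div_le_one ha).mpr hta]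
  calc a ≤ b / C * (1 + t / a) ^ r := h
    _ ≤ b / C * 2 ^ r := by gcongr
    _ = 2 ^ r / C * b := by ring

lemma rpow_one_add_le_of_lt (ha : 0 < a) (hb : 0 ≤ b) (hr : 0 ≤ r) (hC : 0 < C)
    (hat : a < t) (h : a ≤ b / C * (1 + t / a) ^ r) :
    a ^ (1 + r) ≤ 2 ^ r / C * b * t ^ r := by
  have ht : 0 ≤ t := ha.le.trans hat.le
  have hbracket : 1 + t / a ≤ 2 * t / a := by
    rw [mul_div_assoc, two_mul]
    linarith [(one_le_div ha).mpr hat.le]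
  have h2 : a ≤ b / C * (2 ^ r * t ^ r / a ^ r) := by
    calc a ≤ b / C * (1 + t / a) ^ r := h
      _ ≤ b / C * (2 * t / a) ^ r := by gcongr
      _ = b / C * (2 ^ r * t ^ r / a ^ r) := by
        rw [div_rpow (by positivity) ha.le, mul_rpow zero_le_two ht]
  have har : 0 < a ^ r := rpow_pos_of_pos ha r
  calc a ^ (1 + r) = a * a ^ r := by rw [rpow_add ha, rpow_one]
    _ ≤ b / C * (2 ^ r * t ^ r / a ^ r) * a ^ r := by gcongr
    _ = 2 ^ r / C * b * t ^ r := by field_simp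

lemma le_rpow_inv_mul_of_rpow_one_add_le {A u : ℝ} (ha : 0 ≤ a) (hb : 0 ≤ b) (ht : 0 ≤ t)
    (hu : 0 ≤ u) (hr : 0 ≤ r) (hA : 0 ≤ A) (htu : t ≤ b * u)
    (h : a ^ (1 + r) ≤ A * b * t ^ r) :
    a ≤ A ^ (1 / (1 + r)) * b * u ^ (r / (r + 1)) := by
  have hr1 : 0 < 1 + r := by linarith
  have hroot :
      (A ^ (1 / (1 + r)) * b * u ^ (r / (r + 1))) ^ (1 + r) = A * b ^ (1 + r) * u ^ r := by
    rw [mul_rpow (by positivity) (by positivity), mul_rpow (by positivity) hb,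
      ← rpow_mul hA, ← rpow_mul hu, add_comm r 1]
    field_simp
    rw [rpow_one]
    ring
  rw [← rpow_le_rpow_iff ha (by positivity) hr1, hroot]
  calc a ^ (1 + r) ≤ A * b * t ^ r := h
    _ ≤ A * b * (b * u) ^ r := by gcongr
    _ = A * b ^ (1 + r) * u ^ r := by
      rw [mul_rpow hb hu, rpow_add' hb hr1.ne', rpow_one]; ring

end RealInequalities

theorem SelfMajorizing.slowGrowth {ρ : E → ℝ} {r C : ℝ} (h : SelfMajorizing ρ r C)
    (hρ : ∀ x, 0 < ρ x) (hr : 0 < r) (hC : 0 < C) :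
    SlowGrowth ρ (r / (r + 1)) (max (2 ^ r / C) ((2 ^ r / C) ^ (1 / (1 + r)))) := by
  intro x α
  have hρx := hρ x
  have hρα := hρ α
  have hA : 0 ≤ 2 ^ r / C := by positivity
  have hkey := h.le_div_mul hρ hC x α
  have hu : 1 ≤ (1 + ‖x - α‖ / ρ x) ^ (r / (r + 1)) :=
    one_le_rpow (le_add_of_nonneg_right (by positivity)) (by positivity)
  rcases le_or_gt ‖x - α‖ (ρ α) with hnear | hfar
  · calc ρ α ≤ 2 ^ r / C * ρ x * 1 :=
          (le_two_rpow_div_mul_of_le hρα hρx.le (norm_nonneg _) hr.le hC hnear hkey).trans_eq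
            (mul_one _).symm
      _ ≤ _ := by gcongr; exact le_max_left _ _
  · have htu : ‖x - α‖ ≤ ρ x * (1 + ‖x - α‖ / ρ x) := by
      rw [mul_add, mul_one, mul_div_cancel₀ _ hρx.ne']; linarith
    calc ρ α ≤ (2 ^ r / C) ^ (1 / (1 + r)) * ρ x * (1 + ‖x - α‖ / ρ x) ^ (r / (r + 1)) :=
          le_rpow_inv_mul_of_rpow_one_add_le hρα.le hρx.le (norm_nonneg _) (by positivity) hr.le
            hA htu (rpow_one_add_le_of_lt hρα hρx.le hr.le hC hfar hkey)
      _ ≤ _ := by gcongr; exact le_max_right _ _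

theorem self_majorization_implies_slow_growth_general
    (d : ℕ) (ρ : EuclideanSpace ℝ (Fin d) → ℝ) (hρ : ∀ x, 0 < ρ x)
    (r : ℝ) (hr : 0 < r) (Csm : ℝ) (hCsm : 0 < Csm)
    (hsm : ∀ x y, ρ y ≥ Csm * ρ x * (1 + ‖x - y‖ / ρ x) ^ (-r)) :
    ∀ x α, ρ α ≤
      max ((2 : ℝ) ^ r / Csm) (((2 : ℝ) ^ r / Csm) ^ (1 / (1 + r))) *
        ρ x * (1 + ‖x - α‖ / ρ x) ^ (r / (r + 1)) :=
  SelfMajorizing.slowGrowth hsm hρ hr hCsm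

/-- If a positive function `ρ` on `ℝ^d` satisfies self-majorization of order
`r` with constant `C_sm`, then it satisfies `(1-ε)`-slow growth with `ε = 1/(r+1)` and constant
`C_sg = max (2^r/C_sm) ((2^r/C_sm)^(1/(1+r)))`; i.e. the growth exponent is
`1 - 1/(r+1) = r/(r+1)`. -/
theorem self_majorization_implies_slow_growth
    (d : ℕ) (hd : 0 < d) (ρ : EuclideanSpace ℝ (Fin d) → ℝ) (hρ : ∀ x, 0 < ρ x)
    (r : ℝ) (hr : 0 < r) (Csm : ℝ) (hCsm : 0 < Csm)
    (hsm : ∀ x y, ρ y ≥ Csm * ρ x * (1 + ‖x - y‖ / ρ x) ^ (-r)) :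
    ∀ x α, ρ α ≤
      max ((2 : ℝ) ^ r / Csm) (((2 : ℝ) ^ r / Csm) ^ (1 / (1 + r))) *
        ρ x * (1 + ‖x - α‖ / ρ x) ^ (r / (r + 1)) :=
  self_majorization_implies_slow_growth_general d ρ hρ r hr Csm hCsm hsm
end

section
/- Let d be a positive integer, r > 0, and let ρ : ℝ^d → ℝ be a positive function such that for every x ∈ ℝ^d the majorant H(x) := sup_{y ∈ ℝ^d} ρ(y) · (1 + |x-y|/ρ(y))^{-r} is finite (the supremand is bounded above in y for each x). Then: (i) H(x) ≥ ρ(x) for every x ∈ ℝ^d (so H is positive); and (ii) there exists a constant C_r > 0, depending only on r, such that for every x ∈ ℝ^d, sup_{z ∈ ℝ^d} H(z) · (1 + |x-z|/H(z))^{-r} ≤ C_r · H(x); in particular H is self-majorizing of order r. -/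
/-!
Write `H = majorant d r ρ`. Seen from distance `s`, a value `t > 0` is worth
`t (1 + s/t)^(-r)`, and this is monotone and continuous in `t`, so it commutes with the
supremum defining `H z`. Attenuating twice, first by `|z - y|` and then by `|x - z|`, costs at
least as much as attenuating once by `|z - y| + |x - z| ≥ |x - y|`, because an attenuated value
is at most the original one. Hence `H z (1 + |x - z|/H z)^(-r) ≤ H x`, i.e. `C_r = 1`.
-/

open Real Set

noncomputable def majorant (d : ℕ) (r : ℝ) (ρ : EuclideanSpace ℝ (Fin d) → ℝ) :
    EuclideanSpace ℝ (Fin d) → ℝ :=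
  fun x => ⨆ y, ρ y * (1 + ‖x - y‖ / ρ y) ^ (-r)

noncomputable def attenuate (r s t : ℝ) : ℝ := t * (1 + s / t) ^ (-r)

section attenuate

variable {r s s' t : ℝ}

@[simp]
lemma attenuate_zero (r t : ℝ) : attenuate r 0 t = t := by
  simp [attenuate]

lemma attenuate_le_self (hr : 0 ≤ r) (hs : 0 ≤ s) (ht : 0 < t) : attenuate r s t ≤ t :=
  mul_le_of_le_one_right ht.le <|
    rpow_le_one_of_one_le_of_nonpos (le_add_of_nonneg_right (by positivity)) (by linarith)

lemma attenuate_pos (hs : 0 ≤ s) (ht : 0 < t) : 0 < attenuate r s t := by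
  unfold attenuate; positivity

lemma attenuate_le_attenuate_of_le (hr : 0 ≤ r) (hs : 0 ≤ s) (hss' : s ≤ s') (ht : 0 < t) :
    attenuate r s' t ≤ attenuate r s t := by
  have hst : s / t ≤ s' / t := div_le_div_of_nonneg_right hss' ht.le
  exact mul_le_mul_of_nonneg_left
    (rpow_le_rpow_of_nonpos (by positivity) (by linarith) (by linarith)) ht.le

lemma attenuate_eq_mul_div_rpow (hs : 0 ≤ s) (ht : 0 < t) :
    attenuate r s t = t * (t / (t + s)) ^ r := by
  rw [attenuate, show 1 + s / t = (t + s) / t by field_simp, rpow_neg (by positivity),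
    ← inv_rpow (by positivity), inv_div]

lemma monotoneOn_attenuate (hr : 0 ≤ r) (hs : 0 ≤ s) : MonotoneOn (attenuate r s) (Ioi 0) := by
  intro a (ha : 0 < a) b (hb : 0 < b) hab
  rw [attenuate_eq_mul_div_rpow hs ha, attenuate_eq_mul_div_rpow hs hb]
  have hfrac : a / (a + s) ≤ b / (b + s) := by
    rw [div_le_div_iff₀ (by positivity) (by positivity)]
    nlinarith
  gcongr

lemma continuousOn_attenuate (hs : 0 ≤ s) : ContinuousOn (attenuate r s) (Ioi 0) := by
  have hbase : ContinuousOn (fun t : ℝ => 1 + s / t) (Ioi 0) :=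
    continuousOn_const.add (continuousOn_const.div continuousOn_id fun _ ht => ne_of_gt ht)
  exact continuousOn_id.mul <| hbase.rpow_const
    fun t (ht : 0 < t) => Or.inl (add_pos_of_pos_of_nonneg one_pos (div_nonneg hs ht.le)).ne'

lemma attenuate_attenuate_le (hr : 0 ≤ r) (hs : 0 ≤ s) (hs' : 0 ≤ s') (ht : 0 < t) :
    attenuate r s (attenuate r s' t) ≤ attenuate r (s' + s) t := by
  set a := attenuate r s' t
  have ha : 0 < a := attenuate_pos hs' ht
  have hat : s / t ≤ s / a := div_le_div_of_nonneg_left hs ha (attenuate_le_self hr hs' ht)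
  have hprod : 1 + (s' + s) / t ≤ (1 + s' / t) * (1 + s / a) := by
    have : 0 ≤ s' / t * (s / a) := by positivity
    rw [add_div]; nlinarith
  calc a * (1 + s / a) ^ (-r) = t * ((1 + s' / t) * (1 + s / a)) ^ (-r) := by
        rw [mul_rpow (by positivity) (by positivity), ← mul_assoc]; rfl
    _ ≤ attenuate r (s' + s) t :=
        mul_le_mul_of_nonneg_left (rpow_le_rpow_of_nonpos (by positivity) hprod (by linarith))
          ht.le

lemma attenuate_ciSup {ι : Sort*} [Nonempty ι] {g : ι → ℝ} (hr : 0 ≤ r) (hs : 0 ≤ s)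
    (hg : ∀ i, 0 < g i) (hbdd : BddAbove (range g)) :
    attenuate r s (⨆ i, g i) = ⨆ i, attenuate r s (g i) := by
  have hpos : 0 < ⨆ i, g i := (hg (Classical.arbitrary ι)).trans_le (le_ciSup hbdd _)
  have hcont : ContinuousWithinAt (attenuate r s) (range g) (sSup (range g)) :=
    ((continuousOn_attenuate hs).continuousAt (Ioi_mem_nhds hpos)).continuousWithinAt
  have hmono : MonotoneOn (attenuate r s) (range g) :=
    (monotoneOn_attenuate hr hs).mono (range_subset_iff.2 hg)
  rw [iSup, hmono.map_csSup_of_continuousWithinAt hcont (range_nonempty g) hbdd, ← range_comp]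
  rfl

end attenuate

section majorant

variable {d : ℕ} {r : ℝ} {ρ : EuclideanSpace ℝ (Fin d) → ℝ}

lemma majorant_eq_iSup_attenuate (x : EuclideanSpace ℝ (Fin d)) :
    majorant d r ρ x = ⨆ y, attenuate r ‖x - y‖ (ρ y) :=
  rfl

lemma le_majorant {x : EuclideanSpace ℝ (Fin d)}
    (hbdd : BddAbove (range fun y => attenuate r ‖x - y‖ (ρ y))) :
    ρ x ≤ majorant d r ρ x := by
  calc ρ x = attenuate r ‖x - x‖ (ρ x) := by simp
    _ ≤ majorant d r ρ x := le_ciSup hbdd x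

lemma attenuate_majorant_le (hr : 0 ≤ r) (hρ : ∀ x, 0 < ρ x)
    (hbdd : ∀ x, BddAbove (range fun y => attenuate r ‖x - y‖ (ρ y)))
    (x z : EuclideanSpace ℝ (Fin d)) :
    attenuate r ‖x - z‖ (majorant d r ρ z) ≤ majorant d r ρ x := by
  rw [majorant_eq_iSup_attenuate z,
    attenuate_ciSup hr (norm_nonneg _) (fun y => attenuate_pos (norm_nonneg _) (hρ y)) (hbdd z)]
  refine ciSup_le fun y => ?_
  calc attenuate r ‖x - z‖ (attenuate r ‖z - y‖ (ρ y))
      ≤ attenuate r (‖z - y‖ + ‖x - z‖) (ρ y) :=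
        attenuate_attenuate_le hr (norm_nonneg _) (norm_nonneg _) (hρ y)
    _ ≤ attenuate r ‖x - y‖ (ρ y) :=
        attenuate_le_attenuate_of_le hr (norm_nonneg _)
          ((norm_sub_le_norm_sub_add_norm_sub x z y).trans_eq (add_comm _ _)) (hρ y)
    _ ≤ majorant d r ρ x := le_ciSup (hbdd x) y

end majorant

theorem majorant_self_majorizing_general (d : ℕ) (r : ℝ) (hr : 0 < r) :
    ∃ Cr > 0, ∀ ρ : EuclideanSpace ℝ (Fin d) → ℝ, (∀ x, 0 < ρ x) →
      (∀ x, BddAbove (Set.range fun y => ρ y * (1 + ‖x - y‖ / ρ y) ^ (-r))) →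
      (∀ x, ρ x ≤ majorant d r ρ x) ∧
      (∀ x z, majorant d r ρ z * (1 + ‖x - z‖ / majorant d r ρ z) ^ (-r) ≤
          Cr * majorant d r ρ x) ∧
      (∃ Csm > 0, ∀ x z, majorant d r ρ z ≥
          Csm * majorant d r ρ x * (1 + ‖x - z‖ / majorant d r ρ x) ^ (-r)) := by
  refine ⟨1, one_pos, fun ρ hρ hbdd => ⟨fun x => le_majorant (hbdd x), fun x z => ?_,
    1, one_pos, fun x z => ?_⟩⟩
  · rw [one_mul]
    exact attenuate_majorant_le hr.le hρ hbdd x z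
  · rw [one_mul, ← norm_sub_rev]
    exact attenuate_majorant_le hr.le hρ hbdd z x

/-- For a positive `ρ` whose majorant `H` of order `r` is finite
(the supremand being bounded above for each `x`): (i) `H ≥ ρ` pointwise; and
(ii) there is `C_r > 0` depending only on `r` with
`sup_z H(z)(1 + |x-z|/H(z))^(-r) ≤ C_r H(x)` for every `x`; in particular `H` is
self-majorizing of order `r`. -/
theorem majorant_self_majorizing (d : ℕ) (hd : 0 < d) (r : ℝ) (hr : 0 < r) :
    ∃ Cr > 0, ∀ ρ : EuclideanSpace ℝ (Fin d) → ℝ, (∀ x, 0 < ρ x) →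
      (∀ x, BddAbove (Set.range fun y => ρ y * (1 + ‖x - y‖ / ρ y) ^ (-r))) →
      (∀ x, ρ x ≤ majorant d r ρ x) ∧
      (∀ x z, majorant d r ρ z * (1 + ‖x - z‖ / majorant d r ρ z) ^ (-r) ≤
          Cr * majorant d r ρ x) ∧
      (∃ Csm > 0, ∀ x z, majorant d r ρ z ≥
          Csm * majorant d r ρ x * (1 + ‖x - z‖ / majorant d r ρ x) ^ (-r)) :=
  majorant_self_majorizing_general d r hr
end

section
/- Let d, k, ℓ be positive integers with 2k ≥ d and ℓ + d > 2k, let ε ∈ (0,1), and let ρ : ℝ^d → ℝ be a positive function satisfying (1-ε)-slow growth with constant C_sg > 0. Then there exists a constant C > 0, depending only on d, k, ℓ, ε and C_sg, such that for all x, α ∈ ℝ^d, ρ(α)^{2k-d} · (1 + |x-α|/ρ(α))^{-(ℓ+d-2k)} ≤ C · ρ(x)^{2k-d} · (1 + |x-α|/ρ(x))^{2k-d-ℓε}. -/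
open Real

/-- For positive integers `d, k, ℓ` with `2k ≥ d` and `ℓ + d > 2k`,
`ε ∈ (0,1)`, and a positive `ρ` satisfying `(1-ε)`-slow growth with constant `C_sg`,
there is `C > 0` depending only on `d, k, ℓ, ε, C_sg` such that for all `x, α`,
`ρ(α)^(2k-d) (1 + |x-α|/ρ(α))^(-(ℓ+d-2k)) ≤ C ρ(x)^(2k-d) (1 + |x-α|/ρ(x))^(2k-d-ℓε)`. -/
theorem slow_growth_pointwise_kernel_bound
    (d k l : ℕ) (hd : 0 < d) (hk : 0 < k) (hl : 0 < l)
    (hdk : d ≤ 2 * k) (hldk : 2 * k < l + d)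
    (ε : ℝ) (hε0 : 0 < ε) (hε1 : ε < 1) (Csg : ℝ) (hCsg : 0 < Csg) :
    ∃ C > 0, ∀ ρ : EuclideanSpace ℝ (Fin d) → ℝ, (∀ x, 0 < ρ x) →
      (∀ x α, ρ α ≤ Csg * ρ x * (1 + ‖x - α‖ / ρ x) ^ (1 - ε)) →
      ∀ x α, ρ α ^ ((2 * k : ℝ) - d) * (1 + ‖x - α‖ / ρ α) ^ (-((l : ℝ) + d - 2 * k)) ≤
        C * ρ x ^ ((2 * k : ℝ) - d) * (1 + ‖x - α‖ / ρ x) ^ ((2 * k : ℝ) - d - l * ε) := by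
  have hdk' : (d : ℝ) ≤ 2 * k := by exact_mod_cast hdk
  have hldk' : (2 * k : ℝ) < l + d := by exact_mod_cast hldk
  set m : ℝ := (2 * k : ℝ) - d with hm
  set n : ℝ := (l : ℝ) + d - 2 * k with hn
  have hm0 : 0 ≤ m := by simp only [hm]; linarith
  have hn0 : 0 < n := by simp only [hn]; push_cast at hldk' ⊢; linarith
  set M : ℝ := max 1 Csg with hM
  have hM1 : (1:ℝ) ≤ M := le_max_left _ _
  have hMC : Csg ≤ M := le_max_right _ _
  have hM0 : 0 < M := lt_of_lt_of_le one_pos hM1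
  refine ⟨Csg ^ m * M ^ n, by positivity, ?_⟩
  intro ρ hρ hsg x α
  set a := ρ α with hadef
  set b := ρ x with hbdef
  set r := ‖x - α‖ with hrdef
  have ha : 0 < a := hρ α
  have hb : 0 < b := hρ x
  have hr : 0 ≤ r := norm_nonneg _
  have hA : (1:ℝ) ≤ 1 + r / a := le_add_of_nonneg_right (by positivity)
  have hB : (1:ℝ) ≤ 1 + r / b := le_add_of_nonneg_right (by positivity)
  have hA0 : (0:ℝ) < 1 + r / a := lt_of_lt_of_le one_pos hA
  have hB0 : (0:ℝ) < 1 + r / b := lt_of_lt_of_le one_pos hB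
  have h1 : a ≤ Csg * b * (1 + r / b) ^ (1 - ε) := hsg x α
  -- key: (1+r/b)^ε ≤ M * (1+r/a)
  have hBE0 : (0:ℝ) < (1 + r / b) ^ (1 - ε) := rpow_pos_of_pos hB0 _
  have h2 : (1 + r / b) ^ ε ≤ M * (1 + r / a) := by
    have hab : a / b ≤ Csg * (1 + r / b) ^ (1 - ε) := by
      rw [div_le_iff₀ hb]; nlinarith
    have hrb : r / b ≤ Csg * (r / a) * (1 + r / b) ^ (1 - ε) := by
      have heq : r / b = (r / a) * (a / b) := by field_simp
      calc r / b = (r / a) * (a / b) := heq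
        _ ≤ (r / a) * (Csg * (1 + r / b) ^ (1 - ε)) :=
              mul_le_mul_of_nonneg_left hab (by positivity)
        _ = Csg * (r / a) * (1 + r / b) ^ (1 - ε) := by ring
    have hone : (1:ℝ) ≤ (1 + r / b) ^ (1 - ε) :=
      Real.one_le_rpow hB (by linarith)
    have step : 1 + r / b ≤ M * (1 + r / a) * (1 + r / b) ^ (1 - ε) := by
      calc 1 + r / b ≤ (1 + r / b) ^ (1 - ε) + Csg * (r / a) * (1 + r / b) ^ (1 - ε) := by
            linarith
        _ = (1 + Csg * (r / a)) * (1 + r / b) ^ (1 - ε) := by ring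
        _ ≤ M * (1 + r / a) * (1 + r / b) ^ (1 - ε) := by
            have h5 : 1 + Csg * (r / a) ≤ M * (1 + r / a) := by
              have hra : 0 ≤ r / a := by positivity
              nlinarith
            exact mul_le_mul_of_nonneg_right h5 (le_of_lt hBE0)
    have hsplit : (1 + r / b) ^ ε * (1 + r / b) ^ (1 - ε) = 1 + r / b := by
      rw [← Real.rpow_add hB0]; norm_num
    refine le_of_mul_le_mul_right ?_ hBE0
    rw [hsplit]
    calc 1 + r / b ≤ M * (1 + r / a) * (1 + r / b) ^ (1 - ε) := step
      _ = M * (1 + r / a) * (1 + r / b) ^ (1 - ε) := rfl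
  -- a^m bound
  have h3 : a ^ m ≤ Csg ^ m * b ^ m * (1 + r / b) ^ (m * (1 - ε)) := by
    have := Real.rpow_le_rpow ha.le h1 hm0
    calc a ^ m ≤ (Csg * b * (1 + r / b) ^ (1 - ε)) ^ m := this
      _ = Csg ^ m * b ^ m * (1 + r / b) ^ (m * (1 - ε)) := by
          rw [Real.mul_rpow (by positivity) (le_of_lt hBE0),
            Real.mul_rpow hCsg.le hb.le, ← Real.rpow_mul hB0.le,
            mul_comm (1 - ε) m]
  -- A^(-n) bound
  have h4 : (1 + r / a) ^ (-n) ≤ M ^ n * (1 + r / b) ^ (-(ε * n)) := by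
    have h6 : (1 + r / b) ^ (ε * n) ≤ M ^ n * (1 + r / a) ^ n := by
      have := Real.rpow_le_rpow (by positivity) h2 hn0.le
      rwa [← Real.rpow_mul hB0.le, Real.mul_rpow hM0.le hA0.le] at this
    have key : (1 + r / a) ^ (-n) * (1 + r / b) ^ (ε * n) ≤ M ^ n := by
      calc (1 + r / a) ^ (-n) * (1 + r / b) ^ (ε * n)
          ≤ (1 + r / a) ^ (-n) * (M ^ n * (1 + r / a) ^ n) :=
            mul_le_mul_of_nonneg_left h6 (Real.rpow_nonneg hA0.le _)
        _ = M ^ n * ((1 + r / a) ^ (-n) * (1 + r / a) ^ n) := by ring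
        _ = M ^ n := by
            rw [← Real.rpow_add hA0, neg_add_cancel, Real.rpow_zero, mul_one]
    have h7 := mul_le_mul_of_nonneg_right key (Real.rpow_nonneg hB0.le (-(ε * n)))
    calc (1 + r / a) ^ (-n)
        = (1 + r / a) ^ (-n) * (1 + r / b) ^ (ε * n) * (1 + r / b) ^ (-(ε * n)) := by
          rw [mul_assoc, ← Real.rpow_add hB0, add_neg_cancel, Real.rpow_zero, mul_one]
      _ ≤ M ^ n * (1 + r / b) ^ (-(ε * n)) := h7
  -- combine
  have hml : m + n = (l : ℝ) := by simp only [hm, hn]; ring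
  have hexp : m * (1 - ε) + -(ε * n) = m - l * ε := by rw [← hml]; ring
  calc a ^ m * (1 + r / a) ^ (-n)
      ≤ (Csg ^ m * b ^ m * (1 + r / b) ^ (m * (1 - ε))) * (M ^ n * (1 + r / b) ^ (-(ε * n))) :=
        mul_le_mul h3 h4 (Real.rpow_nonneg hA0.le _) (by positivity)
    _ = Csg ^ m * M ^ n * b ^ m * ((1 + r / b) ^ (m * (1 - ε)) * (1 + r / b) ^ (-(ε * n))) := by
        ring
    _ = Csg ^ m * M ^ n * b ^ m * (1 + r / b) ^ (m - l * ε) := by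
        rw [← Real.rpow_add hB0, hexp]
end

section
/- Let d, k be positive integers, σ ∈ (0, 2k), Γ ≥ 1, C₁ > 0, M ≥ 0, and let ρ : ℝ^d → ℝ be a positive function. Let D be a set of indices ν, each assigned a gender e(ν) ∈ {1, …, 2^d − 1}, a scale ℓ(ν) = 2^{j(ν)} with j(ν) ∈ ℤ, and a corner c(ν) = 2^{j(ν)}·m(ν) with m(ν) ∈ ℤ^d, such that distinct indices have distinct triples (gender, scale, corner). For each ν ∈ D let ψ_ν : ℝ^d → ℝ be a C^{2k} function supported in the closed ball B(c(ν), Γ·ℓ(ν)) with |Δ^k ψ_ν(x)| ≤ C₁·ℓ(ν)^{-2k} for all x, and let f_ν ∈ ℝ satisfy |f_ν| ≤ M·ℓ(ν)^σ. Let D_g = { ν ∈ D : ρ(y) ≤ ℓ(ν) for every y ∈ B(c(ν), Γ·ℓ(ν)) }. Then there exists a constant C > 0, depending only on d, k, σ, Γ and C₁, such that for every x ∈ ℝ^d, ∑_{ν ∈ D_g} |f_ν| · |Δ^k ψ_ν(x)| ≤ C · M · ρ(x)^{σ - 2k}. -/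
open Real

/-- The Laplacian of a function on `ℝ^d`: the sum of its pure second partial
derivatives, `Δ f(x) = ∑ i, ∂²f/∂xᵢ²(x)`. -/
noncomputable def Lap (d : ℕ) (f : EuclideanSpace ℝ (Fin d) → ℝ) :
    EuclideanSpace ℝ (Fin d) → ℝ :=
  fun x => ∑ i : Fin d,
    iteratedFDeriv ℝ 2 f x ![EuclideanSpace.single i 1, EuclideanSpace.single i 1]

/-! A cube contributes at `x` only if its ball `B(c(ν), Γℓ(ν))` contains `x`, and then goodness
forces `ρ(x) ≤ ℓ(ν)`. At a fixed scale `ℓ` and gender, at most `(⌈2Γ⌉ + 1)^d` corners of `ℓℤ^d`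
lie within `Γℓ` of `x` (coordinatewise), and each such cube contributes at most
`C₁ M ℓ^(σ-2k)`. Since `σ - 2k < 0`, summing over the dyadic scales `ℓ = 2^j ≥ ρ(x)` is a
geometric series bounded by a multiple of `ρ(x)^(σ-2k)`. -/

open Finset ENNReal Metric

lemma ENNReal.tsum_le_card_mul_tsum_of_injective {ι α β : Type*} [Fintype α]
    {f : ι → ℝ≥0∞} {g : β → ℝ≥0∞} {φ : ι → α × β} (hφ : Function.Injective φ)
    (hf : ∀ i, f i ≤ g (φ i).2) : ∑' i, f i ≤ Fintype.card α * ∑' b, g b :=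
  calc ∑' i, f i ≤ ∑' i, g (φ i).2 := ENNReal.tsum_le_tsum hf
    _ ≤ ∑' p : α × β, g p.2 := ENNReal.tsum_comp_le_tsum_of_injective hφ fun p => g p.2
    _ = Fintype.card α * ∑' b, g b := by simp [ENNReal.tsum_prod']

section

variable {d : ℕ}

lemma support_Lap_subset_tsupport (f : EuclideanSpace ℝ (Fin d) → ℝ) :
    Function.support (Lap d f) ⊆ tsupport f := by
  intro x hx
  by_contra h
  have : iteratedFDeriv ℝ 2 f x = 0 := by
    by_contra h'
    exact h (support_iteratedFDeriv_subset 2 h')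
  simp [Lap, this] at hx

lemma support_iterate_Lap_subset_tsupport (k : ℕ) (f : EuclideanSpace ℝ (Fin d) → ℝ) :
    Function.support ((Lap d)^[k] f) ⊆ tsupport f := by
  induction k generalizing f with
  | zero => exact subset_tsupport f
  | succ k ih =>
    rw [Function.iterate_succ_apply]
    exact (ih (Lap d f)).trans
      (closure_minimal (support_Lap_subset_tsupport f) (isClosed_tsupport f))

lemma iterate_Lap_apply_eq_zero_of_notMem (k : ℕ) {f : EuclideanSpace ℝ (Fin d) → ℝ}
    {K : Set (EuclideanSpace ℝ (Fin d))} (hf : Function.support f ⊆ K) (hK : IsClosed K)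
    {x : EuclideanSpace ℝ (Fin d)} (hx : x ∉ K) : (Lap d)^[k] f x = 0 :=
  Function.notMem_support.mp fun h =>
    hx (closure_minimal hf hK (support_iterate_Lap_subset_tsupport k f h))

lemma abs_mul_abs_iterate_Lap_le_indicator (k : ℕ) {ψ : EuclideanSpace ℝ (Fin d) → ℝ}
    {c x : EuclideanSpace ℝ (Fin d)} {a Γ ℓ σ C₁ M : ℝ} (hℓ : 0 < ℓ) (hM : 0 ≤ M)
    (hψ : Function.support ψ ⊆ closedBall c (Γ * ℓ))
    (hlap : ∀ y, |(Lap d)^[k] ψ y| ≤ C₁ * ℓ ^ (-(2 * (k : ℝ)))) (ha : |a| ≤ M * ℓ ^ σ) :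
    |a| * |(Lap d)^[k] ψ x| ≤
      (closedBall c (Γ * ℓ)).indicator (fun _ => C₁ * M * ℓ ^ (σ - 2 * (k : ℝ))) x := by
  by_cases hx : x ∈ closedBall c (Γ * ℓ)
  · rw [Set.indicator_of_mem hx]
    calc |a| * |(Lap d)^[k] ψ x| ≤ M * ℓ ^ σ * (C₁ * ℓ ^ (-(2 * (k : ℝ)))) :=
          mul_le_mul ha (hlap x) (abs_nonneg _) (by positivity)
      _ = C₁ * M * ℓ ^ (σ - 2 * (k : ℝ)) := by
          rw [sub_eq_add_neg, rpow_add hℓ]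
          ring
  · simp [hx, iterate_Lap_apply_eq_zero_of_notMem k hψ isClosed_closedBall hx]

lemma Int.mem_Icc_ceil_floor_of_abs_sub_le {a Γ : ℝ} {n : ℤ} (h : |a - n| ≤ Γ) :
    n ∈ Icc ⌈a - Γ⌉ ⌊a + Γ⌋ := by
  rw [abs_le] at h
  rw [mem_Icc, Int.ceil_le, Int.le_floor]
  constructor <;> linarith

lemma Int.card_Icc_ceil_floor_le (a Γ : ℝ) :
    (Icc ⌈a - Γ⌉ ⌊a + Γ⌋).card ≤ ⌈2 * Γ⌉₊ + 1 := by
  rw [Int.card_Icc, Int.toNat_le]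
  have hfloor := Int.floor_le (a + Γ)
  have hceil := Int.le_ceil (a - Γ)
  have hN := Nat.le_ceil (2 * Γ)
  have : ((⌊a + Γ⌋ + 1 - ⌈a - Γ⌉ : ℤ) : ℝ) ≤ ((⌈2 * Γ⌉₊ + 1 : ℕ) : ℝ) := by
    push_cast
    linarith
  exact_mod_cast this

noncomputable def latticePoint (ℓ : ℝ) (m : Fin d → ℤ) : EuclideanSpace ℝ (Fin d) :=
  (EuclideanSpace.equiv (Fin d) ℝ).symm fun i => ℓ * m i

lemma encard_setOf_mem_closedBall_latticePoint_le (x : EuclideanSpace ℝ (Fin d))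
    {ℓ : ℝ} (hℓ : 0 < ℓ) (Γ : ℝ) :
    {m : Fin d → ℤ | x ∈ closedBall (latticePoint ℓ m) (Γ * ℓ)}.encard ≤
      ((⌈2 * Γ⌉₊ + 1) ^ d : ℕ) := by
  let box : Finset (Fin d → ℤ) :=
    Fintype.piFinset fun i => Icc ⌈x i / ℓ - Γ⌉ ⌊x i / ℓ + Γ⌋
  have hsub : {m : Fin d → ℤ | x ∈ closedBall (latticePoint ℓ m) (Γ * ℓ)} ⊆ box := by
    intro m hm
    refine Fintype.mem_piFinset.mpr fun i => Int.mem_Icc_ceil_floor_of_abs_sub_le ?_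
    have hi : |x i - ℓ * m i| ≤ Γ * ℓ :=
      (PiLp.dist_apply_le x (latticePoint ℓ m) i).trans (mem_closedBall.mp hm)
    rwa [show x i / ℓ - m i = (x i - ℓ * m i) / ℓ by field_simp, abs_div, abs_of_pos hℓ,
      div_le_iff₀ hℓ]
  have hcard : box.card ≤ (⌈2 * Γ⌉₊ + 1) ^ d := by
    rw [Fintype.card_piFinset]
    exact (prod_le_prod' fun i _ => Int.card_Icc_ceil_floor_le (x i / ℓ) Γ).trans_eq
      (by simp)
  calc _ ≤ (box : Set (Fin d → ℤ)).encard := Set.encard_le_encard hsub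
    _ = box.card := Set.encard_coe_eq_coe_finsetCard box
    _ ≤ _ := by exact_mod_cast hcard

lemma tsum_ite_le_zpow_rpow_le {b t u : ℝ} (hb : 1 < b) (ht : t < 0) (hu : 0 < u) :
    ∑' J : ℤ, (if u ≤ b ^ J then ENNReal.ofReal ((b ^ J) ^ t) else 0) ≤
      ENNReal.ofReal (u ^ t / (1 - b ^ t)) := by
  have hb0 : 0 < b := one_pos.trans hb
  have hr0 : 0 ≤ b ^ t := (rpow_pos_of_pos hb0 t).le
  have hr1 : b ^ t < 1 := rpow_lt_one_of_one_lt_of_neg hb ht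
  set j₀ : ℤ := ⌈logb b u⌉
  have hscale (J : ℤ) : u ≤ b ^ J ↔ j₀ ≤ J := by
    rw [Int.ceil_le, logb_le_iff_le_rpow hb hu, Real.rpow_intCast]
  have hshift : Function.Injective fun n : ℕ => j₀ + n := fun _ _ h => by simpa using h
  have hsupp : Function.support (fun J : ℤ => if u ≤ b ^ J then ENNReal.ofReal ((b ^ J) ^ t)
      else 0) ⊆ Set.range fun n : ℕ => j₀ + n := by
    intro J hJ
    have : j₀ ≤ J := (hscale J).mp (by by_contra h; simp [h] at hJ)
    exact ⟨(J - j₀).toNat, show j₀ + ((J - j₀).toNat : ℤ) = J by omega⟩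
  have hterm (n : ℕ) : (if u ≤ b ^ (j₀ + n) then ENNReal.ofReal ((b ^ (j₀ + n)) ^ t) else 0) =
      ENNReal.ofReal ((b ^ j₀) ^ t) * ENNReal.ofReal (b ^ t) ^ n := by
    have hpow : (b ^ n) ^ t = (b ^ t) ^ n := by
      rw [← Real.rpow_natCast, ← Real.rpow_natCast, ← rpow_mul hb0.le, ← rpow_mul hb0.le,
        mul_comm]
    rw [if_pos ((hscale _).mpr (by omega)), ← ofReal_pow hr0, ← ofReal_mul (by positivity),
      zpow_add₀ hb0.ne', mul_rpow (by positivity) (by positivity), zpow_natCast, hpow]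
  calc _ = ∑' n : ℕ, ENNReal.ofReal ((b ^ j₀) ^ t) * ENNReal.ofReal (b ^ t) ^ n := by
        rw [← hshift.tsum_eq hsupp]
        exact tsum_congr hterm
    _ = ENNReal.ofReal ((b ^ j₀) ^ t) * (1 - ENNReal.ofReal (b ^ t))⁻¹ := by
        rw [ENNReal.tsum_mul_left, ENNReal.tsum_geometric]
    _ ≤ ENNReal.ofReal (u ^ t) * ENNReal.ofReal (1 - b ^ t)⁻¹ := by
        refine mul_le_mul' (ofReal_le_ofReal ?_) ?_
        · exact rpow_le_rpow_of_nonpos hu ((hscale j₀).mpr le_rfl) ht.le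
        · rw [ofReal_inv_of_pos (by linarith), ofReal_sub 1 hr0, ofReal_one]
    _ = _ := by
        rw [div_eq_mul_inv, ofReal_mul (by positivity)]

lemma tsum_mem_closedBall_latticePoint_le (x : EuclideanSpace ℝ (Fin d))
    {b t u : ℝ} (Γ : ℝ) (hb : 1 < b) (ht : t < 0) (hu : 0 < u) :
    ∑' p : {p : ℤ × (Fin d → ℤ) //
        u ≤ b ^ p.1 ∧ x ∈ closedBall (latticePoint (b ^ p.1) p.2) (Γ * b ^ p.1)},
      ENNReal.ofReal ((b ^ p.1.1) ^ t) ≤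
      ((⌈2 * Γ⌉₊ + 1) ^ d : ℕ) * ENNReal.ofReal (u ^ t / (1 - b ^ t)) := by
  classical
  have hscale (J : ℤ) : ∑' m : Fin d → ℤ,
      (if u ≤ b ^ J ∧ x ∈ closedBall (latticePoint (b ^ J) m) (Γ * b ^ J)
        then ENNReal.ofReal ((b ^ J) ^ t) else 0) ≤
      ((⌈2 * Γ⌉₊ + 1) ^ d : ℕ) * (if u ≤ b ^ J then ENNReal.ofReal ((b ^ J) ^ t) else 0) := by
    by_cases hJ : u ≤ b ^ J
    · set S := {m : Fin d → ℤ | x ∈ closedBall (latticePoint (b ^ J) m) (Γ * b ^ J)}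
      calc _ = ∑' m, S.indicator (fun _ => ENNReal.ofReal ((b ^ J) ^ t)) m := by
            simp only [hJ, true_and, Set.indicator_apply, S, Set.mem_ofPred_eq]
        _ = S.encard * ENNReal.ofReal ((b ^ J) ^ t) := by
            rw [← _root_.tsum_subtype, tsum_set_const]
        _ ≤ _ := by
          rw [if_pos hJ]
          gcongr
          exact ENat.toENNReal_le.mpr
            (encard_setOf_mem_closedBall_latticePoint_le x (zpow_pos (one_pos.trans hb) J) Γ)
    · simp [hJ]
  refine (_root_.tsum_subtype {p : ℤ × (Fin d → ℤ) | u ≤ b ^ p.1 ∧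
    x ∈ closedBall (latticePoint (b ^ p.1) p.2) (Γ * b ^ p.1)}
    (fun p => ENNReal.ofReal ((b ^ p.1) ^ t))).trans_le ?_
  rw [ENNReal.tsum_prod']
  calc _ ≤ ∑' J : ℤ, ((⌈2 * Γ⌉₊ + 1) ^ d : ℕ) *
        (if u ≤ b ^ J then ENNReal.ofReal ((b ^ J) ^ t) else 0) :=
          ENNReal.tsum_le_tsum fun J => (le_of_eq (by simp [Set.indicator_apply])).trans (hscale J)
    _ ≤ _ := by
      rw [ENNReal.tsum_mul_left]
      exact mul_le_mul_right (tsum_ite_le_zpow_rpow_le hb ht hu) _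

end

theorem good_cubes_laplacian_sum_bound_general
    (d k : ℕ) (σ : ℝ) (hσ : σ < 2 * (k : ℝ))
    (Γ : ℝ) (C₁ : ℝ) (hC₁ : 0 < C₁) :
    ∃ C > 0, ∀ M : ℝ, 0 ≤ M →
      ∀ ρ : EuclideanSpace ℝ (Fin d) → ℝ, (∀ x, 0 < ρ x) →
      ∀ (D : Type) (e : D → ℕ) (j : D → ℤ) (m : D → Fin d → ℤ),
        (∀ ν, 1 ≤ e ν ∧ e ν ≤ 2 ^ d - 1) →
        Function.Injective (fun ν => (e ν, j ν, m ν)) →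
      ∀ c : D → EuclideanSpace ℝ (Fin d),
        (∀ ν, c ν = (EuclideanSpace.equiv (Fin d) ℝ).symm
            (fun i => (2 : ℝ) ^ (j ν) * (m ν i : ℝ))) →
      ∀ ψ : D → EuclideanSpace ℝ (Fin d) → ℝ,
        (∀ ν, ContDiff ℝ (2 * k) (ψ ν)) →
        (∀ ν, Function.support (ψ ν) ⊆ Metric.closedBall (c ν) (Γ * (2 : ℝ) ^ (j ν))) →
        (∀ ν x, |(Lap d)^[k] (ψ ν) x| ≤ C₁ * ((2 : ℝ) ^ (j ν)) ^ (-(2 * (k : ℝ)))) →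
      ∀ f : D → ℝ, (∀ ν, |f ν| ≤ M * ((2 : ℝ) ^ (j ν)) ^ σ) →
      ∀ x, ∑' ν : {ν : D // ∀ y ∈ Metric.closedBall (c ν) (Γ * (2 : ℝ) ^ (j ν)),
              ρ y ≤ (2 : ℝ) ^ (j ν)},
            ENNReal.ofReal (|f ν| * |(Lap d)^[k] (ψ ν) x|) ≤
          ENNReal.ofReal (C * M * ρ x ^ (σ - 2 * (k : ℝ))) := by
  set t := σ - 2 * (k : ℝ)
  have ht : t < 0 := by linarith
  have hr : (2 : ℝ) ^ t < 1 := rpow_lt_one_of_one_lt_of_neg one_lt_two ht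
  set N : ℕ := (⌈2 * Γ⌉₊ + 1) ^ d
  refine ⟨2 ^ d * N * C₁ / (1 - 2 ^ t), div_pos (by positivity) (sub_pos.2 hr), ?_⟩
  intro M hM ρ hρ D e j m he hinj c hc ψ _ hsupp hlap f hf x
  set S := {p : ℤ × (Fin d → ℤ) |
    ρ x ≤ 2 ^ p.1 ∧ x ∈ closedBall (latticePoint (2 ^ p.1) p.2) (Γ * 2 ^ p.1)}
  set g : ℤ × (Fin d → ℤ) → ℝ≥0∞ := fun p => ENNReal.ofReal (((2 : ℝ) ^ p.1) ^ t)
  set Good := {ν : D // ∀ y ∈ closedBall (c ν) (Γ * (2 : ℝ) ^ (j ν)), ρ y ≤ (2 : ℝ) ^ (j ν)}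
  have hterm (ν : Good) : ENNReal.ofReal (|f ν| * |(Lap d)^[k] (ψ ν) x|) ≤
      ENNReal.ofReal (C₁ * M) * S.indicator g (j ν, m ν) := by
    have hν := abs_mul_abs_iterate_Lap_le_indicator k (x := x) (zpow_pos two_pos (j ν)) hM
      (hsupp ν) (hlap ν) (hf ν)
    by_cases hx : x ∈ closedBall (c ν) (Γ * 2 ^ j ν)
    · have hmem : (j ν, m ν) ∈ S := ⟨ν.2 x hx, by rwa [hc ν] at hx⟩
      rw [Set.indicator_of_mem hmem, ← ofReal_mul (by positivity)]
      exact ofReal_le_ofReal (by rwa [Set.indicator_of_mem hx] at hν)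
    · rw [Set.indicator_of_notMem hx] at hν
      simp [le_antisymm hν (by positivity)]
  have he_lt (ν : D) : e ν < 2 ^ d := Nat.lt_of_le_pred (Nat.two_pow_pos d) (he ν).2
  have hembed : Function.Injective fun ν : Good => ((⟨e ν, he_lt ν⟩ : Fin (2 ^ d)), j ν, m ν) :=
    fun ν ν' h => Subtype.ext <| hinj <| by simpa [Fin.ext_iff] using h
  calc _ ≤ Fintype.card (Fin (2 ^ d)) * ∑' p, ENNReal.ofReal (C₁ * M) * S.indicator g p :=
        ENNReal.tsum_le_card_mul_tsum_of_injective hembed hterm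
    _ = ENNReal.ofReal (C₁ * M) * (2 ^ d * ∑' p : S, g p) := by
        rw [ENNReal.tsum_mul_left, _root_.tsum_subtype, Fintype.card_fin]
        push_cast
        ring
    _ ≤ ENNReal.ofReal (C₁ * M) * (2 ^ d * (N * ENNReal.ofReal (ρ x ^ t / (1 - 2 ^ t)))) := by
        gcongr
        exact tsum_mem_closedBall_latticePoint_le x Γ one_lt_two ht (hρ x)
    _ = _ := by
        rw [show 2 ^ d * N * C₁ / (1 - 2 ^ t) * M * ρ x ^ t =
            C₁ * M * (2 ^ d * (N * (ρ x ^ t / (1 - 2 ^ t)))) by ring,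
          ofReal_mul (by positivity : 0 ≤ C₁ * M), ofReal_mul (by positivity : (0 : ℝ) ≤ 2 ^ d),
          ofReal_mul (Nat.cast_nonneg N), ofReal_pow zero_le_two, ofReal_ofNat, ofReal_natCast]

/-- Wavelet indices `ν ∈ D` carry a gender `e(ν) ∈ {1,…,2^d−1}`, a
scale `ℓ(ν) = 2^(j(ν))` and a corner `c(ν) = 2^(j(ν)) m(ν)`, distinct indices having
distinct triples.  Each `ψ_ν` is `C^(2k)`, supported in `B(c(ν), Γ ℓ(ν))`, with
`|Δᵏψ_ν| ≤ C₁ ℓ(ν)^(-2k)`, and `|f_ν| ≤ M ℓ(ν)^σ`.  Over the "good" cubes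
`D_g = {ν : ρ(y) ≤ ℓ(ν) for all y ∈ B(c(ν), Γ ℓ(ν))}` one has
`∑_{ν ∈ D_g} |f_ν| |Δᵏψ_ν(x)| ≤ C M ρ(x)^(σ-2k)` for a constant `C` depending only on
`d, k, σ, Γ, C₁` (the sum interpreted as a `tsum` in `ℝ≥0∞`). -/
theorem good_cubes_laplacian_sum_bound
    (d k : ℕ) (hd : 0 < d) (hk : 0 < k) (σ : ℝ) (hσ0 : 0 < σ) (hσ : σ < 2 * (k : ℝ))
    (Γ : ℝ) (hΓ : 1 ≤ Γ) (C₁ : ℝ) (hC₁ : 0 < C₁) :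
    ∃ C > 0, ∀ M : ℝ, 0 ≤ M →
      ∀ ρ : EuclideanSpace ℝ (Fin d) → ℝ, (∀ x, 0 < ρ x) →
      ∀ (D : Type) (e : D → ℕ) (j : D → ℤ) (m : D → Fin d → ℤ),
        (∀ ν, 1 ≤ e ν ∧ e ν ≤ 2 ^ d - 1) →
        Function.Injective (fun ν => (e ν, j ν, m ν)) →
      ∀ c : D → EuclideanSpace ℝ (Fin d),
        (∀ ν, c ν = (EuclideanSpace.equiv (Fin d) ℝ).symm
            (fun i => (2 : ℝ) ^ (j ν) * (m ν i : ℝ))) →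
      ∀ ψ : D → EuclideanSpace ℝ (Fin d) → ℝ,
        (∀ ν, ContDiff ℝ (2 * k) (ψ ν)) →
        (∀ ν, Function.support (ψ ν) ⊆ Metric.closedBall (c ν) (Γ * (2 : ℝ) ^ (j ν))) →
        (∀ ν x, |(Lap d)^[k] (ψ ν) x| ≤ C₁ * ((2 : ℝ) ^ (j ν)) ^ (-(2 * (k : ℝ)))) →
      ∀ f : D → ℝ, (∀ ν, |f ν| ≤ M * ((2 : ℝ) ^ (j ν)) ^ σ) →
      ∀ x, ∑' ν : {ν : D // ∀ y ∈ Metric.closedBall (c ν) (Γ * (2 : ℝ) ^ (j ν)),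
              ρ y ≤ (2 : ℝ) ^ (j ν)},
            ENNReal.ofReal (|f ν| * |(Lap d)^[k] (ψ ν) x|) ≤
          ENNReal.ofReal (C * M * ρ x ^ (σ - 2 * (k : ℝ))) :=
  good_cubes_laplacian_sum_bound_general d k σ hσ Γ C₁ hC₁
end
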